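/- Define H : ℝ² → ℝ by H(a, b) = (1/2)·∫₀^{π/2} (max((√3/2)(a·cos φ + b·sin φ), 0))² · cos φ dφ. Then for all real numbers ṡ, ν̇ with ṡ > 0 and 0 < ν̇ ≤ ṡ/2, the Legendre–Fenchel transform satisfies: sup over (a, b) ∈ ℝ² of (a·ṡ + b·ν̇ − H(a, b)) = (4/(27·ν̇))·(9·ṡ·ν̇² + ṡ³ + (ṡ² − 3ν̇²)^{3/2}). -/

import Mathlib

open Real MeasureTheory intervalIntegral

/-- The Hamiltonian of the convexity-constrained Euler–Mumford elastica model
(with `β = 1`) in reduced coordinates. -/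
noncomputable def convexElasticaH (a b : ℝ) : ℝ :=
  (1/2) * ∫ x in (0:ℝ)..(π/2),
    (max ((Real.sqrt 3 / 2) * (a * Real.cos x + b * Real.sin x)) 0)^2
      * Real.cos x


lemma sin_sub_nonneg_aux {p x : ℝ} (hp : p ≤ π/2) (hx : x ∈ Set.Icc 0 p) :
    0 ≤ Real.sin (p - x) := by
  apply Real.sin_nonneg_of_mem_Icc
  exact ⟨by linarith [hx.2], by have := Real.pi_pos; linarith [hx.1]⟩

lemma sin_sub_nonpos_aux {p x : ℝ} (hp0 : 0 ≤ p) (hx : x ∈ Set.Icc p (π/2)) :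
    Real.sin (p - x) ≤ 0 := by
  have h1 : p - x ≤ 0 := by linarith [hx.1]
  have h2 : -π ≤ p - x := by have := Real.pi_pos; linarith [hx.2]
  exact Real.sin_nonpos_of_nonpos_of_neg_pi_le h1 h2

lemma qint2 (p : ℝ) (hp0 : 0 ≤ p) (hp : p ≤ π/2) :
    ∫ x in (0:ℝ)..(π/2), max (Real.sin (p - x)) 0 * (Real.sin x * Real.cos x)
      = Real.sin p * (1 - Real.cos p) / 3 := by
  have hc : Continuous fun x => max (Real.sin (p - x)) 0 * (Real.sin x * Real.cos x) := by fun_prop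
  rw [← intervalIntegral.integral_add_adjacent_intervals (a := (0:ℝ)) (b := p) (c := π/2)
    (hc.intervalIntegrable _ _) (hc.intervalIntegrable _ _)]
  have e2 : (∫ x in p..(π/2), max (Real.sin (p - x)) 0 * (Real.sin x * Real.cos x)) = 0 := by
    rw [intervalIntegral.integral_congr (g := fun _ => (0:ℝ))]
    · simp
    · intro x hx
      rw [Set.uIcc_of_le hp] at hx
      simp [max_eq_right (sin_sub_nonpos_aux hp0 hx)]
  rw [e2, add_zero]
  rw [intervalIntegral.integral_congr (g := fun x => Real.sin (p - x) * (Real.sin x * Real.cos x))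
    (by intro x hx; rw [Set.uIcc_of_le hp0] at hx
        simp [max_eq_left (sin_sub_nonneg_aux hp hx)])]
  rw [intervalIntegral.integral_eq_sub_of_hasDerivAt
    (f := fun y => -(Real.sin p * (Real.cos y ^ 3 / 3)) - Real.cos p * (Real.sin y ^ 3 / 3))
    (fun x _ => by
      have d2 := ((Real.hasDerivAt_cos x).pow 3).div_const 3
      have d3 := ((Real.hasDerivAt_sin x).pow 3).div_const 3
      have h := ((d2.const_mul (Real.sin p)).neg).sub (d3.const_mul (Real.cos p))
      convert h using 1
      · rfl
      rw [Real.sin_sub]; push_cast; ring)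
    ((by fun_prop : Continuous fun x => Real.sin (p - x) * (Real.sin x * Real.cos x)).intervalIntegrable _ _)]
  simp only [Real.sin_zero, Real.cos_zero]
  linear_combination (-(Real.sin p * Real.cos p)/3) * Real.sin_sq_add_cos_sq p

lemma qint3 (p : ℝ) (hp0 : 0 ≤ p) (hp : p ≤ π/2) :
    ∫ x in (0:ℝ)..(π/2), (max (Real.sin (p - x)) 0)^2 * Real.cos x
      = 2 * Real.sin p * (1 - Real.cos p) / 3 := by
  have hc : Continuous fun x => (max (Real.sin (p - x)) 0)^2 * Real.cos x := by fun_prop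
  rw [← intervalIntegral.integral_add_adjacent_intervals (a := (0:ℝ)) (b := p) (c := π/2)
    (hc.intervalIntegrable _ _) (hc.intervalIntegrable _ _)]
  have e2 : (∫ x in p..(π/2), (max (Real.sin (p - x)) 0)^2 * Real.cos x) = 0 := by
    rw [intervalIntegral.integral_congr (g := fun _ => (0:ℝ))]
    · simp
    · intro x hx
      rw [Set.uIcc_of_le hp] at hx
      simp [max_eq_right (sin_sub_nonpos_aux hp0 hx)]
  rw [e2, add_zero]
  rw [intervalIntegral.integral_congr (g := fun x => Real.sin (p - x) ^ 2 * Real.cos x)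
    (by intro x hx; rw [Set.uIcc_of_le hp0] at hx
        simp [max_eq_left (sin_sub_nonneg_aux hp hx)])]
  rw [intervalIntegral.integral_eq_sub_of_hasDerivAt
    (f := fun y => Real.sin p ^ 2 * (Real.sin y - Real.sin y ^ 3 / 3)
      + 2 * Real.sin p * Real.cos p * (Real.cos y ^ 3 / 3) + Real.cos p ^ 2 * (Real.sin y ^ 3 / 3))
    (fun x _ => by
      have d2 := ((Real.hasDerivAt_sin x).pow 3).div_const 3
      have d3 := ((Real.hasDerivAt_cos x).pow 3).div_const 3
      have h := ((((Real.hasDerivAt_sin x).sub d2).const_mul (Real.sin p ^ 2)).add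
        (d3.const_mul (2 * Real.sin p * Real.cos p))).add (d2.const_mul (Real.cos p ^ 2))
      convert h using 1
      · rfl
      rw [Real.sin_sub]; push_cast
      linear_combination (Real.sin p^2 * Real.cos x) * Real.sin_sq_add_cos_sq x)
    ((by fun_prop : Continuous fun x => Real.sin (p - x) ^ 2 * Real.cos x).intervalIntegrable _ _)]
  simp only [Real.sin_zero, Real.cos_zero]
  linear_combination (Real.sin p * (2 + 2*Real.cos p^2 - Real.sin p^2)/3) * Real.sin_sq_add_cos_sq p

lemma qint1 (p : ℝ) (hp0 : 0 ≤ p) (hp : p ≤ π/2) :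
    ∫ x in (0:ℝ)..(π/2), max (Real.sin (p - x)) 0 * Real.cos x ^ 2
      = (2 - Real.cos p - Real.cos p ^ 2) / 3 := by
  have hc : Continuous fun x => max (Real.sin (p - x)) 0 * Real.cos x ^ 2 := by fun_prop
  rw [← intervalIntegral.integral_add_adjacent_intervals (a := (0:ℝ)) (b := p) (c := π/2)
    (hc.intervalIntegrable _ _) (hc.intervalIntegrable _ _)]
  have e2 : (∫ x in p..(π/2), max (Real.sin (p - x)) 0 * Real.cos x ^ 2) = 0 := by
    rw [intervalIntegral.integral_congr (g := fun _ => (0:ℝ))]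
    · simp
    · intro x hx
      rw [Set.uIcc_of_le hp] at hx
      simp [max_eq_right (sin_sub_nonpos_aux hp0 hx)]
  rw [e2, add_zero]
  rw [intervalIntegral.integral_congr (g := fun x => Real.sin (p - x) * Real.cos x ^ 2)
    (by intro x hx; rw [Set.uIcc_of_le hp0] at hx
        simp [max_eq_left (sin_sub_nonneg_aux hp hx)])]
  rw [intervalIntegral.integral_eq_sub_of_hasDerivAt
    (f := fun y => Real.sin p * (Real.sin y - Real.sin y ^ 3 / 3) + Real.cos p * (Real.cos y ^ 3 / 3))
    (fun x _ => by
      have d2 := ((Real.hasDerivAt_sin x).pow 3).div_const 3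
      have d3 := ((Real.hasDerivAt_cos x).pow 3).div_const 3
      have h := (((Real.hasDerivAt_sin x).sub d2).const_mul (Real.sin p)).add
        (d3.const_mul (Real.cos p))
      convert h using 1
      · rfl
      rw [Real.sin_sub]; push_cast
      linear_combination (Real.sin p * Real.cos x) * Real.sin_sq_add_cos_sq x)
    ((by fun_prop : Continuous fun x => Real.sin (p - x) * Real.cos x ^ 2).intervalIntegrable _ _)]
  simp only [Real.sin_zero, Real.cos_zero]
  linear_combination ((2 + Real.cos p^2 - Real.sin p^2)/3) * Real.sin_sq_add_cos_sq p

lemma sqrt3_mul_self : Real.sqrt 3 * Real.sqrt 3 = 3 := Real.mul_self_sqrt (by norm_num)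

lemma claim1 (k p a b : ℝ) (hp0 : 0 ≤ p) (hp : p ≤ π/2) :
    ∫ x in (0:ℝ)..(π/2),
      ((Real.sqrt 3 / 2) * (a * Real.cos x + b * Real.sin x))
        * ((Real.sqrt 3 / 2) * k * max (Real.sin (p - x)) 0) * Real.cos x
      = a * (k * (1 - Real.cos p) * (2 + Real.cos p) / 4)
        + b * (k * Real.sin p * (1 - Real.cos p) / 4) := by
  rw [intervalIntegral.integral_congr
    (g := fun x => (3/4*k*a) * (max (Real.sin (p - x)) 0 * Real.cos x ^ 2)
      + (3/4*k*b) * (max (Real.sin (p - x)) 0 * (Real.sin x * Real.cos x)))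
    (fun x _ => by
      linear_combination ((k*a*(max (Real.sin (p-x)) 0)*Real.cos x^2
        + k*b*(max (Real.sin (p-x)) 0)*(Real.sin x*Real.cos x))/4) * sqrt3_mul_self)]
  rw [intervalIntegral.integral_add
    (((by fun_prop : Continuous fun x => (3/4*k*a) * (max (Real.sin (p - x)) 0 * Real.cos x ^ 2))).intervalIntegrable _ _)
    (((by fun_prop : Continuous fun x => (3/4*k*b) * (max (Real.sin (p - x)) 0 * (Real.sin x * Real.cos x)))).intervalIntegrable _ _),
    intervalIntegral.integral_const_mul, intervalIntegral.integral_const_mul,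
    qint1 p hp0 hp, qint2 p hp0 hp]
  ring

lemma claim3 (k p : ℝ) (hp0 : 0 ≤ p) (hp : p ≤ π/2) :
    ∫ x in (0:ℝ)..(π/2),
      ((Real.sqrt 3 / 2) * k * max (Real.sin (p - x)) 0)^2 * Real.cos x
      = k^2 * Real.sin p * (1 - Real.cos p) / 2 := by
  rw [intervalIntegral.integral_congr
    (g := fun x => (3/4*k^2) * ((max (Real.sin (p - x)) 0)^2 * Real.cos x))
    (fun x _ => by
      linear_combination (k^2*(max (Real.sin (p-x)) 0)^2*Real.cos x/4) * sqrt3_mul_self)]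
  rw [intervalIntegral.integral_const_mul, qint3 p hp0 hp]
  ring

lemma key (k p s v F : ℝ) (hk : 0 ≤ k) (hp0 : 0 ≤ p) (hp : p ≤ π/2)
    (hs : s = k * (1 - Real.cos p) * (2 + Real.cos p) / 4)
    (hv : v = k * Real.sin p * (1 - Real.cos p) / 4)
    (hF : F = k^2 * Real.sin p * (1 - Real.cos p) / 4) :
    IsLUB {w : ℝ | ∃ a b : ℝ, w = a * s + b * v - convexElasticaH a b} F := by
  have hc32 : (0:ℝ) ≤ Real.sqrt 3 / 2 * k := by positivity
  -- the maximizer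
  have hmax : ∀ x : ℝ, max ((Real.sqrt 3 / 2) * ((k * Real.sin p) * Real.cos x + (-(k * Real.cos p)) * Real.sin x)) 0
      = (Real.sqrt 3 / 2) * k * max (Real.sin (p - x)) 0 := by
    intro x
    have h1 : (Real.sqrt 3 / 2) * ((k * Real.sin p) * Real.cos x + (-(k * Real.cos p)) * Real.sin x)
        = (Real.sqrt 3 / 2 * k) * Real.sin (p - x) := by rw [Real.sin_sub]; ring
    rw [h1, ← mul_zero (Real.sqrt 3 / 2 * k), ← mul_max_of_nonneg _ _ hc32, mul_zero]
  have hHmax : convexElasticaH (k * Real.sin p) (-(k * Real.cos p)) = F := by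
    unfold convexElasticaH
    rw [intervalIntegral.integral_congr
      (g := fun x => ((Real.sqrt 3 / 2) * k * max (Real.sin (p - x)) 0)^2 * Real.cos x)
      (fun x _ => by rw [hmax x]), claim3 k p hp0 hp, hF]
    ring
  have hmem : F = (k * Real.sin p) * s + (-(k * Real.cos p)) * v
      - convexElasticaH (k * Real.sin p) (-(k * Real.cos p)) := by
    rw [hHmax]
    have h1 := claim1 k p (k * Real.sin p) (-(k * Real.cos p)) hp0 hp
    have h2 : ∫ x in (0:ℝ)..(π/2),
        ((Real.sqrt 3 / 2) * ((k * Real.sin p) * Real.cos x + (-(k * Real.cos p)) * Real.sin x))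
          * ((Real.sqrt 3 / 2) * k * max (Real.sin (p - x)) 0) * Real.cos x
        = ∫ x in (0:ℝ)..(π/2),
          ((Real.sqrt 3 / 2) * k * max (Real.sin (p - x)) 0)^2 * Real.cos x := by
      apply intervalIntegral.integral_congr
      intro x _
      have h1' : (Real.sqrt 3 / 2) * ((k * Real.sin p) * Real.cos x + (-(k * Real.cos p)) * Real.sin x)
          = (Real.sqrt 3 / 2 * k) * Real.sin (p - x) := by rw [Real.sin_sub]; ring
      have h3 : Real.sin (p - x) * max (Real.sin (p - x)) 0 = (max (Real.sin (p - x)) 0)^2 := by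
        rcases le_total (Real.sin (p - x)) 0 with h | h
        · simp [max_eq_right h]
        · rw [max_eq_left h]; ring
      dsimp only
      rw [h1']
      linear_combination ((Real.sqrt 3 / 2 * k)^2 * Real.cos x) * h3
    rw [h2, claim3 k p hp0 hp] at h1
    rw [hs, hv, hF]
    linarith [h1]
  constructor
  · rintro w ⟨a, b, rfl⟩
    have h1 := claim1 k p a b hp0 hp
    have hub : (∫ x in (0:ℝ)..(π/2),
        ((Real.sqrt 3 / 2) * (a * Real.cos x + b * Real.sin x))
          * ((Real.sqrt 3 / 2) * k * max (Real.sin (p - x)) 0) * Real.cos x)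
        ≤ ∫ x in (0:ℝ)..(π/2),
          ((max ((Real.sqrt 3 / 2) * (a * Real.cos x + b * Real.sin x)) 0)^2 * Real.cos x / 2
            + ((Real.sqrt 3 / 2) * k * max (Real.sin (p - x)) 0)^2 * Real.cos x / 2) := by
      apply intervalIntegral.integral_mono_on (by positivity)
        ((by fun_prop : Continuous fun x =>
          ((Real.sqrt 3 / 2) * (a * Real.cos x + b * Real.sin x))
            * ((Real.sqrt 3 / 2) * k * max (Real.sin (p - x)) 0) * Real.cos x).intervalIntegrable _ _)
        ((by fun_prop : Continuous fun x =>
          ((max ((Real.sqrt 3 / 2) * (a * Real.cos x + b * Real.sin x)) 0)^2 * Real.cos x / 2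
            + ((Real.sqrt 3 / 2) * k * max (Real.sin (p - x)) 0)^2 * Real.cos x / 2)).intervalIntegrable _ _)
      intro x hx
      have hcos : 0 ≤ Real.cos x := Real.cos_nonneg_of_mem_Icc
        ⟨by have := Real.pi_pos; linarith [hx.1], hx.2⟩
      set m := (Real.sqrt 3 / 2) * (a * Real.cos x + b * Real.sin x) with hm
      set G := (Real.sqrt 3 / 2) * k * max (Real.sin (p - x)) 0 with hG
      have hGnn : 0 ≤ G := by
        rw [hG]; exact mul_nonneg hc32 (le_max_right _ _)
      nlinarith [mul_nonneg (mul_nonneg (sub_nonneg.mpr (le_max_left m 0)) hGnn) hcos,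
        mul_nonneg (sq_nonneg (max m 0 - G)) hcos]
    have h3 : (∫ x in (0:ℝ)..(π/2),
        ((max ((Real.sqrt 3 / 2) * (a * Real.cos x + b * Real.sin x)) 0)^2 * Real.cos x / 2
          + ((Real.sqrt 3 / 2) * k * max (Real.sin (p - x)) 0)^2 * Real.cos x / 2))
        = convexElasticaH a b + F := by
      rw [intervalIntegral.integral_add
        ((by fun_prop : Continuous fun x =>
          (max ((Real.sqrt 3 / 2) * (a * Real.cos x + b * Real.sin x)) 0)^2 * Real.cos x / 2).intervalIntegrable _ _)
        ((by fun_prop : Continuous fun x =>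
          ((Real.sqrt 3 / 2) * k * max (Real.sin (p - x)) 0)^2 * Real.cos x / 2).intervalIntegrable _ _),
        intervalIntegral.integral_div, intervalIntegral.integral_div, claim3 k p hp0 hp]
      unfold convexElasticaH
      rw [hF]; ring
    rw [h3] at hub
    rw [h1] at hub
    rw [hs, hv]
    linarith [hub]
  · intro w hw
    exact hw ⟨k * Real.sin p, -(k * Real.cos p), hmem⟩

/-- On the branch `0 < ν̇ ≤ ṡ/2`, the Legendre–Fenchel transform of the
convexity-constrained elastica Hamiltonian equals
`(4/(27ν̇))(9ṡν̇² + ṡ³ + (ṡ² − 3ν̇²)^{3/2})`. -/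
theorem stmt_12 (s v : ℝ) (hs : 0 < s) (hv : 0 < v) (hvs : v ≤ s / 2) :
    IsLUB {w : ℝ | ∃ a b : ℝ, w = a * s + b * v - convexElasticaH a b}
      ((4 / (27 * v)) * (9 * s * v^2 + s^3 + (s^2 - 3 * v^2) ^ ((3:ℝ)/2))) := by
  have hx : (0:ℝ) ≤ s^2 - 3*v^2 := by nlinarith
  set D := Real.sqrt (s^2 - 3*v^2) with hDdef
  have hD0 : 0 ≤ D := Real.sqrt_nonneg _
  have hD2 : D^2 = s^2 - 3*v^2 := Real.sq_sqrt hx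
  have hDs : D < s := by nlinarith
  have hsD : s ≤ 2*D := by nlinarith
  have hden : 0 < s^2 + v^2 := by positivity
  set C := (2*s + D)*(2*D - s)/(3*(s^2 + v^2)) with hCdef
  set S := v*(2*s + D)/(s^2 + v^2) with hSdef
  have hC0 : 0 ≤ C := by
    apply div_nonneg (mul_nonneg (by linarith) (by linarith)) (by linarith)
  have hS0 : 0 < S := by
    apply div_pos (mul_pos hv (by linarith)) hden
  have hSC : S^2 + C^2 = 1 := by
    rw [hSdef, hCdef]
    field_simp
    linear_combination ((5)*s^2*v^0*D^0 + (12)*s^1*v^0*D^1 + (-3)*s^0*v^2*D^0 + (4)*s^0*v^0*D^2) * hD2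
  have hC1 : C < 1 := by nlinarith [mul_pos hS0 hS0]
  have hp0 : 0 ≤ Real.arccos C := Real.arccos_nonneg C
  have hp : Real.arccos C ≤ π/2 := Real.arccos_le_pi_div_two.mpr hC0
  have hcos : Real.cos (Real.arccos C) = C := Real.cos_arccos (by linarith) (by linarith)
  have hsin : Real.sin (Real.arccos C) = S := by
    rw [Real.sin_arccos, show 1 - C^2 = S^2 by linarith [hSC]]
    exact Real.sqrt_sq hS0.le
  set k := 4*v/(S*(1-C)) with hkdef
  have hk0 : 0 ≤ k := le_of_lt (div_pos (by linarith) (mul_pos hS0 (by linarith)))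
  have hrw : (s^2 - 3*v^2) ^ ((3:ℝ)/2) = D^3 := by
    rw [show ((3:ℝ)/2) = (1/2)*3 by norm_num, Real.rpow_mul hx, ← Real.sqrt_eq_rpow,
      ← hDdef, ← Real.rpow_natCast D 3]
    norm_num
  have h2sD : (0:ℝ) < 2*s + D := by linarith
  have h1C' : 0 < 3*(s^2+v^2) - (2*s+D)*(2*D-s) := by
    nlinarith [mul_pos hs (sub_pos.mpr hDs)]
  have h1Cb : (0:ℝ) < 1 - C := by linarith
  apply key k (Real.arccos C) s v _ hk0 hp0 hp
  · rw [hcos, hkdef, hCdef, hSdef]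
    field_simp [hv.ne', h2sD.ne', h1C'.ne', hden.ne']
    rw [mul_div_cancel_left₀ _ (show (s ^ 2 + v ^ 2) * 3 - (s * 2 + D) * (2 * D - s) ≠ 0 by nlinarith [h1C'])]
    linear_combination (-2) * hD2
  · rw [hcos, hsin, hkdef]
    field_simp [hS0.ne', h1Cb.ne']
  · rw [hcos, hsin, hkdef, hrw, hCdef, hSdef]
    field_simp [hv.ne', h2sD.ne', h1C'.ne', hden.ne']
    rw [eq_div_iff (show (s ^ 2 + v ^ 2) * 3 - (s * 2 + D) * (D * 2 - s) ≠ 0 by nlinarith [h1C'])]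
    linear_combination ((-45)*s^2*v^2*D^0 + (9)*s^1*v^2*D^1 + (-10)*s^4*v^0*D^0 + (1)*s^3*v^0*D^1 + (-3)*s^2*v^0*D^2 + (-7)*s^1*v^0*D^3 + (9)*s^0*v^2*D^2 + (-2)*s^0*v^0*D^4 + (-27)*s^0*v^4*D^0) * hD2
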